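/- arXiv:1708.02897 — 3 statements merged into one kernel-verified Lean document; each statement's English description precedes it below -/
import Mathlib

section
/- Let X and Y be compact metric spaces, let E and F be smooth reflexive Banach spaces, and let Δ : Lip(X,E) → Lip(Y,F) be a 2-local standard isometry. Then for every x ∈ X and every u* in the unit sphere S_{E*} of the dual of E, the set A_{x,u*} is nonempty; moreover, ‖v*‖ = 1 for every (y,v*) ∈ A_{x,u*}. -/
open Function Metric Set
open scoped NNReal

/-- A function between a metric space and a normed space is bounded and Lipschitz. -/
def IsBddLip {X E : Type*} [MetricSpace X] [NormedAddCommGroup E] (f : X → E) : Prop :=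
  (∃ K : ℝ, ∀ x y : X, ‖f x - f y‖ ≤ K * dist x y) ∧ ∃ C : ℝ, ∀ x : X, ‖f x‖ ≤ C

/-- The Lipschitz constant `L(f)` of a function. -/
noncomputable def lipConst {X E : Type*} [MetricSpace X] [NormedAddCommGroup E] (f : X → E) : ℝ :=
  sInf {K : ℝ | 0 ≤ K ∧ ∀ x y : X, ‖f x - f y‖ ≤ K * dist x y}

/-- The norm `max {L(f), ‖f‖∞}` of the space `Lip(X,E)`. -/
noncomputable def lipNorm {X E : Type*} [MetricSpace X] [NormedAddCommGroup E] (f : X → E) : ℝ :=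
  max (lipConst f) (⨆ x : X, ‖f x‖)

/-- `T` is a surjective linear isometry from `Lip(X,E)` onto `Lip(Y,F)` (encoded on plain
functions, with all requirements imposed on bounded Lipschitz functions). -/
structure IsLipIso (𝕜 : Type*) {X Y E F : Type*} [RCLike 𝕜] [MetricSpace X] [MetricSpace Y]
    [NormedAddCommGroup E] [NormedSpace 𝕜 E] [NormedAddCommGroup F] [NormedSpace 𝕜 F]
    (T : (X → E) → (Y → F)) : Prop where
  mapsLip : ∀ f, IsBddLip f → IsBddLip (T f)
  map_add : ∀ f g, IsBddLip f → IsBddLip g → T (f + g) = T f + T g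
  map_smul : ∀ (c : 𝕜) (f), IsBddLip f → T (c • f) = c • T f
  norm_map : ∀ f, IsBddLip f → lipNorm (T f) = lipNorm f
  surjOn : ∀ g, IsBddLip g → ∃ f, IsBddLip f ∧ T f = g

/-- `Δ : Lip(X,E) → Lip(Y,F)` is a `2`-local isometry. -/
def Is2LocalLipIso (𝕜 : Type*) {X Y E F : Type*} [RCLike 𝕜] [MetricSpace X] [MetricSpace Y]
    [NormedAddCommGroup E] [NormedSpace 𝕜 E] [NormedAddCommGroup F] [NormedSpace 𝕜 F]
    (Δ : (X → E) → (Y → F)) : Prop :=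
  ∀ f g : X → E, IsBddLip f → IsBddLip g →
    ∃ T : (X → E) → (Y → F), IsLipIso 𝕜 T ∧ Δ f = T f ∧ Δ g = T g

/-- `φ` preserves distances less than `2`. -/
def PreservesDistLT2 {Y X : Type*} [MetricSpace Y] [MetricSpace X] (φ : Y → X) : Prop :=
  ∀ y y' : Y, dist y y' < 2 → dist (φ y) (φ y') = dist y y'

/-- Two points lie in the same `2`-component: they are joined by a finite chain of points with
consecutive distances less than `2`. -/
def SameTwoComponent {Y : Type*} [MetricSpace Y] : Y → Y → Prop :=
  Relation.ReflTransGen fun a b => dist a b < 2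

/-- `T` is a standard isometry from `Lip(X,E)` to `Lip(Y,F)`: there are `φ ∈ Iso_{<2}(Y,X)` and
`J : Y → Iso(E,F)` constant on `2`-components with `T f y = J y (f (φ y))`. -/
def IsStandardLipIso (𝕜 : Type*) {X Y E F : Type*} [RCLike 𝕜] [MetricSpace X] [MetricSpace Y]
    [NormedAddCommGroup E] [NormedSpace 𝕜 E] [NormedAddCommGroup F] [NormedSpace 𝕜 F]
    (T : (X → E) → (Y → F)) : Prop :=
  ∃ (φ : Y → X) (ψ : X → Y) (J : Y → E ≃ₗᵢ[𝕜] F),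
    Function.LeftInverse ψ φ ∧ Function.RightInverse ψ φ ∧
    PreservesDistLT2 φ ∧ PreservesDistLT2 ψ ∧
    (∀ y y' : Y, SameTwoComponent y y' → J y = J y') ∧
    ∀ f, IsBddLip f → ∀ y : Y, T f y = J y (f (φ y))

/-- `Δ : Lip(X,E) → Lip(Y,F)` is a `2`-local standard isometry. -/
def Is2LocalStdLipIso (𝕜 : Type*) {X Y E F : Type*} [RCLike 𝕜] [MetricSpace X] [MetricSpace Y]
    [NormedAddCommGroup E] [NormedSpace 𝕜 E] [NormedAddCommGroup F] [NormedSpace 𝕜 F]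
    (Δ : (X → E) → (Y → F)) : Prop :=
  ∀ f g : X → E, IsBddLip f → IsBddLip g →
    ∃ T : (X → E) → (Y → F), IsStandardLipIso 𝕜 T ∧ Δ f = T f ∧ Δ g = T g

/-- A normed space is smooth: every norm-one vector has a unique norm-one supporting functional. -/
def IsSmooth (𝕜 : Type*) (E : Type*) [RCLike 𝕜] [NormedAddCommGroup E] [NormedSpace 𝕜 E] :
    Prop :=
  ∀ e : E, ‖e‖ = 1 → ∃! u : StrongDual 𝕜 E, ‖u‖ = 1 ∧ u e = 1

/-- A normed space is reflexive: the canonical inclusion in the double dual is onto. -/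
def IsReflexiveSp (𝕜 : Type*) (E : Type*) [RCLike 𝕜] [NormedAddCommGroup E] [NormedSpace 𝕜 E] :
    Prop :=
  Function.Surjective (NormedSpace.inclusionInDoubleDual 𝕜 E)

/-- `E` is `2`-iso-reflexive: every `2`-local isometry on `E` is linear and surjective. -/
def TwoIsoReflexive (𝕜 : Type*) (E : Type*) [RCLike 𝕜] [NormedAddCommGroup E] [NormedSpace 𝕜 E] :
    Prop :=
  ∀ Δ : E → E, (∀ a b : E, ∃ T : E ≃ₗᵢ[𝕜] E, Δ a = T a ∧ Δ b = T b) →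
    (∀ a b : E, Δ (a + b) = Δ a + Δ b) ∧ (∀ (c : 𝕜) (a : E), Δ (c • a) = c • Δ a) ∧
      Function.Surjective Δ

/-- The set `A_{x,u*,f} = {(y,v*) ∈ Y × B_{F*} : v*(Δ(f)(y)) = u*(f(x))}`. -/
def setA (𝕜 : Type*) {X Y E F : Type*} [RCLike 𝕜] [MetricSpace X] [MetricSpace Y]
    [NormedAddCommGroup E] [NormedSpace 𝕜 E] [NormedAddCommGroup F] [NormedSpace 𝕜 F]
    (Δ : (X → E) → (Y → F)) (x : X) (u : StrongDual 𝕜 E) (f : X → E) :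
    Set (Y × StrongDual 𝕜 F) :=
  {p | ‖p.2‖ ≤ 1 ∧ p.2 (Δ f p.1) = u (f x)}

/-- The set `A_{x,u*} = ⋂_{f ∈ Lip(X,E)} A_{x,u*,f}`. -/
def setAInter (𝕜 : Type*) {X Y E F : Type*} [RCLike 𝕜] [MetricSpace X] [MetricSpace Y]
    [NormedAddCommGroup E] [NormedSpace 𝕜 E] [NormedAddCommGroup F] [NormedSpace 𝕜 F]
    (Δ : (X → E) → (Y → F)) (x : X) (u : StrongDual 𝕜 E) :
    Set (Y × StrongDual 𝕜 F) :=
  ⋂ f ∈ {f : X → E | IsBddLip f}, setA 𝕜 Δ x u f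

/- By reflexivity `u` attains its norm at a unit vector `e`. Let `c := z ↦ max (1 - d(z, x)) 0 • e`
and fix `y₀ := φ⁻¹ x` for one standard isometry `T f y = J y (f (φ y))` agreeing with `Δ` at `c`.
Since `‖c‖` equals `1` only at `x`, every standard isometry agreeing with `Δ` at `c` maps `y₀` to
`x`. As `F` is smooth, the unit vector `Δ c y₀ = J y₀ e` has a unique norming functional, which is
therefore `u ∘ (J y₀)⁻¹` for each such `J`; hence `(y₀, u ∘ (J y₀)⁻¹)` lies in every `A_{x,u,f}`.
Testing with the constant function `e` shows that all functionals in `A_{x,u}` have norm one. -/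

section Dual

variable {𝕜 E F : Type*} [RCLike 𝕜] [NormedAddCommGroup E] [NormedSpace 𝕜 E]
  [NormedAddCommGroup F] [NormedSpace 𝕜 F]

lemma IsReflexiveSp.exists_norm_eq_one_apply_eq_one (hE : IsReflexiveSp 𝕜 E)
    {u : StrongDual 𝕜 E} (hu : ‖u‖ = 1) : ∃ e : E, ‖e‖ = 1 ∧ u e = 1 := by
  obtain ⟨g, hg, hgu⟩ := exists_dual_vector 𝕜 u (by simp [hu])
  obtain ⟨e, rfl⟩ := hE g
  refine ⟨e, ?_, ?_⟩
  · rw [← hg]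
    exact ((NormedSpace.inclusionInDoubleDualLi 𝕜).norm_map e).symm
  · simpa [hu] using hgu

lemma norm_eq_one_of_apply_eq_one {v : StrongDual 𝕜 F} {ξ : F} (hv : ‖v‖ ≤ 1) (hξ : ‖ξ‖ = 1)
    (hvξ : v ξ = 1) : ‖v‖ = 1 := by
  refine le_antisymm hv ?_
  simpa [hvξ, hξ] using v.le_opNorm ξ

lemma IsSmooth.eq_of_apply_eq_one (hF : IsSmooth 𝕜 F) {v w : StrongDual 𝕜 F} {ξ : F}
    (hξ : ‖ξ‖ = 1) (hv : ‖v‖ ≤ 1) (hw : ‖w‖ ≤ 1) (hvξ : v ξ = 1) (hwξ : w ξ = 1) : v = w := by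
  obtain ⟨_, -, huniq⟩ := hF ξ hξ
  rw [huniq v ⟨norm_eq_one_of_apply_eq_one hv hξ hvξ, hvξ⟩,
    huniq w ⟨norm_eq_one_of_apply_eq_one hw hξ hwξ, hwξ⟩]

end Dual

lemma isBddLip_const {X E : Type*} [MetricSpace X] [NormedAddCommGroup E] (e : E) :
    IsBddLip (fun _ : X => e) :=
  ⟨⟨0, fun _ _ => by simp⟩, ⟨‖e‖, fun _ => le_rfl⟩⟩

section Peak

variable (𝕜 : Type*) {X E : Type*} [RCLike 𝕜] [MetricSpace X] [NormedAddCommGroup E]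
  [NormedSpace 𝕜 E]

def peak (x : X) (e : E) : X → E := fun z => ((max (1 - dist z x) 0 : ℝ) : 𝕜) • e

variable {𝕜} {x : X} {e : E}

@[simp]
lemma peak_self : peak 𝕜 x e x = e := by simp [peak]

lemma norm_peak (z : X) : ‖peak 𝕜 x e z‖ = max (1 - dist z x) 0 * ‖e‖ := by
  simp [peak, norm_smul]

variable (𝕜 x e) in
lemma isBddLip_peak : IsBddLip (peak 𝕜 x e) := by
  refine ⟨⟨‖e‖, fun a b => ?_⟩, ⟨‖e‖, fun z => ?_⟩⟩
  · have hab : |max (1 - dist a x) 0 - max (1 - dist b x) 0| ≤ dist a b :=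
      calc |max (1 - dist a x) 0 - max (1 - dist b x) 0|
          ≤ |(1 - dist a x) - (1 - dist b x)| := abs_max_sub_max_le_abs _ _ _
        _ = |dist b x - dist a x| := by ring_nf
        _ ≤ dist b a := abs_dist_sub_le b a x
        _ = dist a b := dist_comm b a
    rw [peak, peak, ← sub_smul, ← RCLike.ofReal_sub, norm_smul, RCLike.norm_ofReal, mul_comm]
    exact mul_le_mul_of_nonneg_left hab (norm_nonneg e)
  · rw [norm_peak]
    exact mul_le_of_le_one_left (norm_nonneg e) (max_le (sub_le_self _ dist_nonneg) zero_le_one)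

lemma eq_of_norm_peak_eq (he : e ≠ 0) {z : X} (hz : ‖peak 𝕜 x e z‖ = ‖e‖) : z = x := by
  rw [norm_peak, mul_eq_right₀ (norm_ne_zero_iff.mpr he)] at hz
  have : dist z x ≤ 0 := by
    rcases max_cases (1 - dist z x) 0 with ⟨h, -⟩ | ⟨h, -⟩ <;> linarith
  exact dist_le_zero.mp this

end Peak

namespace Is2LocalStdLipIso

variable {𝕜 X Y E F : Type*} [RCLike 𝕜] [MetricSpace X] [MetricSpace Y]
  [NormedAddCommGroup E] [NormedSpace 𝕜 E] [NormedAddCommGroup F] [NormedSpace 𝕜 F]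
  {Δ : (X → E) → (Y → F)}

lemma exists_eq_apply (hΔ : Is2LocalStdLipIso 𝕜 Δ) {f g : X → E} (hf : IsBddLip f)
    (hg : IsBddLip g) :
    ∃ (φ : Y → X) (J : Y → E ≃ₗᵢ[𝕜] F), Surjective φ ∧
      (∀ y, Δ f y = J y (f (φ y))) ∧ ∀ y, Δ g y = J y (g (φ y)) := by
  obtain ⟨T, ⟨φ, ψ, J, -, hφψ, -, -, -, hT⟩, hΔf, hΔg⟩ := hΔ f g hf hg
  exact ⟨φ, J, hφψ.surjective, by simpa [hΔf] using hT f hf, by simpa [hΔg] using hT g hg⟩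

lemma norm_apply_const (hΔ : Is2LocalStdLipIso 𝕜 Δ) (e : E) (y : Y) :
    ‖Δ (fun _ => e) y‖ = ‖e‖ := by
  obtain ⟨φ, J, -, hΔe, -⟩ := hΔ.exists_eq_apply (isBddLip_const e) (isBddLip_const e)
  rw [hΔe, LinearIsometryEquiv.norm_map]

lemma exists_apply_eq_of_norm_peak (hΔ : Is2LocalStdLipIso 𝕜 Δ) {x : X} {e : E} (he : e ≠ 0)
    {y : Y} (hy : ‖Δ (peak 𝕜 x e) y‖ = ‖e‖) {f : X → E} (hf : IsBddLip f) :
    ∃ J : E ≃ₗᵢ[𝕜] F, Δ (peak 𝕜 x e) y = J e ∧ Δ f y = J (f x) := by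
  obtain ⟨φ, J, -, hΔp, hΔf⟩ := hΔ.exists_eq_apply (isBddLip_peak 𝕜 x e) hf
  have hφy : φ y = x := eq_of_norm_peak_eq he (by rwa [hΔp, LinearIsometryEquiv.norm_map] at hy)
  exact ⟨J y, by rw [hΔp, hφy, peak_self], by rw [hΔf, hφy]⟩

lemma norm_eq_one_of_mem_setAInter (hΔ : Is2LocalStdLipIso 𝕜 Δ) {x : X} {u : StrongDual 𝕜 E}
    {e : E} (he : ‖e‖ = 1) (hue : u e = 1) {p : Y × StrongDual 𝕜 F}
    (hp : p ∈ setAInter 𝕜 Δ x u) : ‖p.2‖ = 1 := by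
  obtain ⟨hp1, hpe⟩ := mem_iInter₂.mp hp (fun _ => e) (isBddLip_const e)
  exact norm_eq_one_of_apply_eq_one hp1 ((hΔ.norm_apply_const e p.1).trans he) (hpe.trans hue)

lemma mem_setAInter_of_apply_peak (hΔ : Is2LocalStdLipIso 𝕜 Δ) (hF : IsSmooth 𝕜 F) {x : X}
    {u : StrongDual 𝕜 E} (hu : ‖u‖ = 1) {e : E} (he : ‖e‖ = 1) (hue : u e = 1) {y : Y}
    {J : E ≃ₗᵢ[𝕜] F} (hJ : Δ (peak 𝕜 x e) y = J e) :
    (y, u.comp (J.symm : F →L[𝕜] E)) ∈ setAInter 𝕜 Δ x u := by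
  have transport_norm_le (J : E ≃ₗᵢ[𝕜] F) : ‖u.comp (J.symm : F →L[𝕜] E)‖ ≤ 1 := by
    rw [ContinuousLinearMap.opNorm_comp_linearIsometryEquiv, hu]
  have hξ : ‖Δ (peak 𝕜 x e) y‖ = 1 := by rw [hJ, LinearIsometryEquiv.norm_map, he]
  refine mem_iInter₂.mpr fun f hf => ⟨transport_norm_le J, ?_⟩
  obtain ⟨J', hJ', hΔf⟩ :=
    hΔ.exists_apply_eq_of_norm_peak (norm_ne_zero_iff.mp (by simp [he])) (hξ.trans he.symm) hf
  have hJJ' : u.comp (J.symm : F →L[𝕜] E) = u.comp (J'.symm : F →L[𝕜] E) :=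
    hF.eq_of_apply_eq_one hξ (transport_norm_le J) (transport_norm_le J')
      (by simp [hJ, hue]) (by simp [hJ', hue])
  rw [hJJ', hΔf]
  simp

end Is2LocalStdLipIso

theorem stmt0_general {𝕜 X Y E F : Type*} [RCLike 𝕜]
    [MetricSpace X] [MetricSpace Y]
    [NormedAddCommGroup E] [NormedSpace 𝕜 E]
    [NormedAddCommGroup F] [NormedSpace 𝕜 F]
    (hErefl : IsReflexiveSp 𝕜 E)
    (hFsm : IsSmooth 𝕜 F)
    (Δ : (X → E) → (Y → F)) (hΔ : Is2LocalStdLipIso 𝕜 Δ)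
    (x : X) (u : StrongDual 𝕜 E) (hu : ‖u‖ = 1) :
    (setAInter 𝕜 Δ x u).Nonempty ∧ ∀ p ∈ setAInter 𝕜 Δ x u, ‖p.2‖ = 1 := by
  obtain ⟨e, he, hue⟩ := hErefl.exists_norm_eq_one_apply_eq_one hu
  obtain ⟨φ, J, hφ, hΔp, -⟩ :=
    hΔ.exists_eq_apply (isBddLip_peak 𝕜 x e) (isBddLip_peak 𝕜 x e)
  obtain ⟨y₀, hy₀⟩ := hφ x
  have hJ : Δ (peak 𝕜 x e) y₀ = J y₀ e := by rw [hΔp, hy₀, peak_self]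
  exact ⟨⟨_, hΔ.mem_setAInter_of_apply_peak hFsm hu he hue hJ⟩,
    fun p hp => hΔ.norm_eq_one_of_mem_setAInter he hue hp⟩

/-- Lemma 2.1 (standard-isometry case): the sets `A_{x,u*}` are nonempty and consist of pairs
whose second component is a norm-one functional. -/
theorem stmt0 {𝕜 X Y E F : Type*} [RCLike 𝕜]
    [MetricSpace X] [CompactSpace X] [MetricSpace Y] [CompactSpace Y]
    [NormedAddCommGroup E] [NormedSpace 𝕜 E] [CompleteSpace E]
    [NormedAddCommGroup F] [NormedSpace 𝕜 F] [CompleteSpace F]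
    (hEsm : IsSmooth 𝕜 E) (hErefl : IsReflexiveSp 𝕜 E)
    (hFsm : IsSmooth 𝕜 F) (hFrefl : IsReflexiveSp 𝕜 F)
    (Δ : (X → E) → (Y → F)) (hΔ : Is2LocalStdLipIso 𝕜 Δ)
    (x : X) (u : StrongDual 𝕜 E) (hu : ‖u‖ = 1) :
    (setAInter 𝕜 Δ x u).Nonempty ∧ ∀ p ∈ setAInter 𝕜 Δ x u, ‖p.2‖ = 1 :=
  stmt0_general hErefl hFsm Δ hΔ x u hu
end

section
/- Let X and Y be compact metric spaces, let E and F be smooth reflexive Banach spaces, and let Δ : Lip(X,E) → Lip(Y,F) be a 2-local standard isometry. Then for every x ∈ X, every u* in the closed unit ball B_{E*} of the dual of E, and every f ∈ Lip(X,E), the set A_{x,u*,f} is nonempty and is a closed subset of Y × B_{F*}, where B_{F*} carries the weak topology and Y × B_{F*} the product topology. -/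
open Function Metric Set
open scoped NNReal

/-! A standard isometry `T` with `Δ f = T f` gives `Δ f y = J y (f (φ y))`, so the point
`(φ⁻¹ x, u* ∘ J(φ⁻¹ x)⁻¹)` lies in `A_{x,u*,f}`. Since `φ` is a local isometry and `J` is locally
constant, `Δ f` is continuous; evaluation `(y, v*) ↦ v*(Δ f y)` is then jointly continuous on
`Y × B_{F*}` because the functionals of `B_{F*}` are uniformly bounded, so `A_{x,u*,f}` is closed. -/

open Filter Topology

section

variable {𝕜 X Y E F : Type*} [RCLike 𝕜] [MetricSpace X] [MetricSpace Y]
  [NormedAddCommGroup E] [NormedSpace 𝕜 E] [NormedAddCommGroup F] [NormedSpace 𝕜 F]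

theorem IsBddLip.continuous {f : X → E} (hf : IsBddLip f) : Continuous f := by
  obtain ⟨⟨K, hK⟩, -⟩ := hf
  exact (LipschitzWith.of_dist_le' fun x y => by simpa only [dist_eq_norm] using hK x y).continuous

theorem PreservesDistLT2.continuous {φ : Y → X} (hφ : PreservesDistLT2 φ) : Continuous φ :=
  Metric.continuous_iff.2 fun y ε hε =>
    ⟨min ε 2, lt_min hε two_pos, fun y' hy' => by
      rw [hφ y' y (hy'.trans_le (min_le_right _ _))]
      exact hy'.trans_le (min_le_left _ _)⟩

theorem IsStandardLipIso.continuous_apply {T : (X → E) → (Y → F)} (hT : IsStandardLipIso 𝕜 T)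
    {f : X → E} (hf : IsBddLip f) : Continuous (T f) := by
  obtain ⟨φ, -, J, -, -, hφ, -, hJ, hTf⟩ := hT
  refine continuous_iff_continuousAt.2 fun y₀ => ?_
  have hJ_near : ∀ᶠ y in 𝓝 y₀, J y₀ (f (φ y)) = T f y := by
    filter_upwards [Metric.ball_mem_nhds y₀ two_pos] with y hy
    rw [hTf f hf, hJ y y₀ (.single hy)]
  exact ((J y₀).continuous.comp (hf.continuous.comp hφ.continuous)).continuousAt.congr hJ_near

theorem Is2LocalStdLipIso.continuous_apply {Δ : (X → E) → (Y → F)} (hΔ : Is2LocalStdLipIso 𝕜 Δ)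
    {f : X → E} (hf : IsBddLip f) : Continuous (Δ f) := by
  obtain ⟨T, hT, hΔf, -⟩ := hΔ f f hf hf
  exact hΔf ▸ hT.continuous_apply hf

theorem Is2LocalStdLipIso.setA_nonempty {Δ : (X → E) → (Y → F)} (hΔ : Is2LocalStdLipIso 𝕜 Δ)
    (x : X) {u : StrongDual 𝕜 E} (hu : ‖u‖ ≤ 1) {f : X → E} (hf : IsBddLip f) :
    (setA 𝕜 Δ x u f).Nonempty := by
  obtain ⟨T, ⟨φ, ψ, J, -, hφψ, -, -, -, hTf⟩, hΔf, -⟩ := hΔ f f hf hf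
  refine ⟨(ψ x, u.comp ((J (ψ x)).symm : F →L[𝕜] E)), ?_, ?_⟩
  · rwa [ContinuousLinearMap.opNorm_comp_linearIsometryEquiv]
  · simp only [ContinuousLinearMap.comp_apply, hΔf, hTf f hf, hφψ x,
      ContinuousLinearEquiv.coe_coe, LinearIsometryEquiv.coe_toContinuousLinearEquiv,
      LinearIsometryEquiv.symm_apply_apply]

end

theorem WeakDual.continuous_apply_of_norm_le {𝕜 F Z : Type*} [RCLike 𝕜] [NormedAddCommGroup F]
    [NormedSpace 𝕜 F] [TopologicalSpace Z] {w : Z → WeakDual 𝕜 F} {g : Z → F} {C : ℝ}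
    (hw : Continuous w) (hg : Continuous g) (hC : ∀ z, ‖toStrongDual (w z)‖ ≤ C) :
    Continuous fun z => w z (g z) := by
  refine continuous_iff_continuousAt.2 fun z₀ => ?_
  -- split `w z (g z) = w z (g z - g z₀) + w z (g z₀)`
  have h_small : Tendsto (fun z => w z (g z - g z₀)) (𝓝 z₀) (𝓝 0) := by
    refine squeeze_zero_norm (fun z => (toStrongDual (w z)).le_of_opNorm_le (hC z) _) ?_
    simpa using (tendsto_const_nhds.mul ((hg.sub continuous_const).norm.tendsto z₀) :
      Tendsto (fun z => C * ‖g z - g z₀‖) (𝓝 z₀) _)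
  have h_fixed : Tendsto (fun z => w z (g z₀)) (𝓝 z₀) (𝓝 (w z₀ (g z₀))) :=
    ((eval_continuous (g z₀)).comp hw).tendsto z₀
  simpa [ContinuousAt, map_sub] using h_small.add h_fixed

theorem stmt2_general {𝕜 X Y E F : Type*} [RCLike 𝕜]
    [MetricSpace X] [MetricSpace Y]
    [NormedAddCommGroup E] [NormedSpace 𝕜 E]
    [NormedAddCommGroup F] [NormedSpace 𝕜 F]
    (Δ : (X → E) → (Y → F)) (hΔ : Is2LocalStdLipIso 𝕜 Δ)
    (x : X) (u : StrongDual 𝕜 E) (hu : ‖u‖ ≤ 1) (f : X → E) (hf : IsBddLip f) :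
    (setA 𝕜 Δ x u f).Nonempty ∧
      IsClosed {p : Y × {v : WeakDual 𝕜 F // ‖WeakDual.toStrongDual v‖ ≤ 1} |
        (WeakDual.toStrongDual (p.2 : WeakDual 𝕜 F)) (Δ f p.1) = u (f x)} :=
  ⟨hΔ.setA_nonempty x hu hf,
    isClosed_eq (WeakDual.continuous_apply_of_norm_le (continuous_subtype_val.comp continuous_snd)
      ((hΔ.continuous_apply hf).comp continuous_fst) fun p => p.2.2) continuous_const⟩

/-- Each set `A_{x,u*,f}` is nonempty and closed in `Y × B_{F*}`, where `B_{F*}` carries the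
weak (weak-*) topology. -/
theorem stmt2 {𝕜 X Y E F : Type*} [RCLike 𝕜]
    [MetricSpace X] [CompactSpace X] [MetricSpace Y] [CompactSpace Y]
    [NormedAddCommGroup E] [NormedSpace 𝕜 E] [CompleteSpace E]
    [NormedAddCommGroup F] [NormedSpace 𝕜 F] [CompleteSpace F]
    (hEsm : IsSmooth 𝕜 E) (hErefl : IsReflexiveSp 𝕜 E)
    (hFsm : IsSmooth 𝕜 F) (hFrefl : IsReflexiveSp 𝕜 F)
    (Δ : (X → E) → (Y → F)) (hΔ : Is2LocalStdLipIso 𝕜 Δ)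
    (x : X) (u : StrongDual 𝕜 E) (hu : ‖u‖ ≤ 1) (f : X → E) (hf : IsBddLip f) :
    (setA 𝕜 Δ x u f).Nonempty ∧
      IsClosed {p : Y × {v : WeakDual 𝕜 F // ‖WeakDual.toStrongDual v‖ ≤ 1} |
        (WeakDual.toStrongDual (p.2 : WeakDual 𝕜 F)) (Δ f p.1) = u (f x)} :=
  stmt2_general Δ hΔ x u hu f hf
end

section
/- Let X and Y be compact metric spaces, let E and F be smooth reflexive Banach spaces, and let Δ : Lip(X,E) → Lip(Y,F) be a 2-local standard isometry. Let y ∈ Y, x_1, x_2 ∈ X, u_1*, u_2* ∈ S_{E*} and v_1*, v_2* ∈ S_{F*}. If (y,v_1*) ∈ A_{x_1,u_1*} and (y,v_2*) ∈ A_{x_2,u_2*}, then x_1 = x_2. -/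
/-!
If `x₁ ≠ x₂`, put `r = d(x₁, x₂)` and take tent functions `fᵢ = max(0, 1 - d(·, xᵢ)/r) • eᵢ` of
height one at `xᵢ`, with `‖eᵢ‖ ≤ 1` and `|uᵢ(eᵢ)| > 1/2`. A single standard isometry agrees with `Δ`
on both `f₁` and `f₂`, so `‖Δ(fᵢ)(y)‖ = ‖fᵢ(z)‖` for one common point `z = φ(y)`. Membership of
`(y, vᵢ)` in `A_{xᵢ,uᵢ}` gives `1/2 < |uᵢ(fᵢ(xᵢ))| ≤ ‖Δ(fᵢ)(y)‖ = ‖fᵢ(z)‖`, forcing `d(z, xᵢ) < r/2`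
for both `i`, which contradicts the triangle inequality.
-/

open Function Metric Set
open scoped NNReal

noncomputable def tent {X : Type*} [MetricSpace X] (a : X) (r : ℝ) (x : X) : ℝ :=
  max 0 (1 - dist x a / r)

section Tent

variable {X : Type*} [MetricSpace X] {a x : X} {r : ℝ}

lemma tent_nonneg : 0 ≤ tent a r x := le_max_left _ _

@[simp]
lemma tent_self : tent a r a = 1 := by simp [tent]

lemma tent_le_one (hr : 0 ≤ r) : tent a r x ≤ 1 :=
  max_le zero_le_one (by linarith [div_nonneg (dist_nonneg (x := x) (y := a)) hr])

lemma abs_tent_sub_tent_le (hr : 0 < r) (x x' : X) :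
    |tent a r x - tent a r x'| ≤ r⁻¹ * dist x x' :=
  calc |tent a r x - tent a r x'| ≤ |(1 - dist x a / r) - (1 - dist x' a / r)| := by
        simpa only [tent, max_comm (0 : ℝ)] using abs_max_sub_max_le_abs _ _ 0
    _ = r⁻¹ * |dist x a - dist x' a| := by
        rw [abs_sub_comm, ← abs_of_pos (inv_pos.mpr hr), ← abs_mul]; congr 1; ring
    _ ≤ r⁻¹ * dist x x' := by gcongr; exact abs_dist_sub_le x x' a

lemma dist_lt_half_of_half_lt_tent (hr : 0 < r) (h : 1 / 2 < tent a r x) : dist x a < r / 2 := by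
  have h' : 1 / 2 < 1 - dist x a / r :=
    (lt_max_iff.mp h).resolve_left (by norm_num)
  have : dist x a / r < 1 / 2 := by linarith
  linarith [(div_lt_iff₀ hr).mp this]

end Tent

section TentSmul

variable {𝕜 X E : Type*} [RCLike 𝕜] [MetricSpace X] [NormedAddCommGroup E] [NormedSpace 𝕜 E]

lemma norm_tent_smul (a : X) (r : ℝ) (e : E) (x : X) :
    ‖(tent a r x : 𝕜) • e‖ = tent a r x * ‖e‖ := by
  rw [norm_smul, RCLike.norm_ofReal, abs_of_nonneg tent_nonneg]

lemma isBddLip_tent_smul (a : X) {r : ℝ} (hr : 0 < r) (e : E) :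
    IsBddLip fun x => (tent a r x : 𝕜) • e := by
  refine ⟨⟨r⁻¹ * ‖e‖, fun x x' => ?_⟩, ‖e‖, fun x => ?_⟩
  · calc ‖(tent a r x : 𝕜) • e - (tent a r x' : 𝕜) • e‖
          = |tent a r x - tent a r x'| * ‖e‖ := by
            rw [← sub_smul, ← RCLike.ofReal_sub, norm_smul, RCLike.norm_ofReal]
      _ ≤ r⁻¹ * dist x x' * ‖e‖ := by gcongr; exact abs_tent_sub_tent_le hr x x'
      _ = r⁻¹ * ‖e‖ * dist x x' := by ring
  · rw [norm_tent_smul]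
    exact mul_le_of_le_one_left (norm_nonneg e) (tent_le_one hr.le)

end TentSmul

section LocalIsometry

variable {𝕜 X Y E F : Type*} [RCLike 𝕜] [MetricSpace X] [MetricSpace Y]
  [NormedAddCommGroup E] [NormedSpace 𝕜 E] [NormedAddCommGroup F] [NormedSpace 𝕜 F]

lemma IsStandardLipIso.exists_norm_apply_eq {T : (X → E) → Y → F} (hT : IsStandardLipIso 𝕜 T) :
    ∃ φ : Y → X, ∀ f, IsBddLip f → ∀ y, ‖T f y‖ = ‖f (φ y)‖ := by
  obtain ⟨φ, -, J, -, -, -, -, -, hTf⟩ := hT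
  exact ⟨φ, fun f hf y => by rw [hTf f hf y, LinearIsometryEquiv.norm_map]⟩

lemma Is2LocalStdLipIso.exists_norm_apply_eq {Δ : (X → E) → Y → F}
    (hΔ : Is2LocalStdLipIso 𝕜 Δ) {f g : X → E} (hf : IsBddLip f) (hg : IsBddLip g) (y : Y) :
    ∃ z, ‖Δ f y‖ = ‖f z‖ ∧ ‖Δ g y‖ = ‖g z‖ := by
  obtain ⟨T, hT, hΔf, hΔg⟩ := hΔ f g hf hg
  obtain ⟨φ, hφ⟩ := hT.exists_norm_apply_eq
  exact ⟨φ y, hΔf ▸ hφ f hf y, hΔg ▸ hφ g hg y⟩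

lemma norm_apply_le_of_mem_setAInter {Δ : (X → E) → Y → F} {x : X} {y : Y}
    {u : StrongDual 𝕜 E} {v : StrongDual 𝕜 F} (h : (y, v) ∈ setAInter 𝕜 Δ x u)
    {f : X → E} (hf : IsBddLip f) : ‖u (f x)‖ ≤ ‖Δ f y‖ := by
  obtain ⟨hv, hvf⟩ := Set.mem_iInter₂.mp h f hf
  calc ‖u (f x)‖ = ‖v (Δ f y)‖ := by rw [hvf]
    _ ≤ ‖v‖ * ‖Δ f y‖ := v.le_opNorm _
    _ ≤ ‖Δ f y‖ := mul_le_of_le_one_left (norm_nonneg _) hv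

lemma dist_lt_half_of_mem_setAInter {Δ : (X → E) → Y → F} {x z : X} {y : Y}
    {u : StrongDual 𝕜 E} {v : StrongDual 𝕜 F} (h : (y, v) ∈ setAInter 𝕜 Δ x u)
    {r : ℝ} (hr : 0 < r) {e : E} (he : ‖e‖ ≤ 1) (hue : 1 / 2 < ‖u e‖)
    (hz : ‖Δ (fun x' => (tent x r x' : 𝕜) • e) y‖ = ‖(tent x r z : 𝕜) • e‖) :
    dist z x < r / 2 := by
  refine dist_lt_half_of_half_lt_tent hr ?_
  calc 1 / 2 < ‖u e‖ := hue
    _ = ‖u ((tent x r x : 𝕜) • e)‖ := by simp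
    _ ≤ ‖Δ (fun x' => (tent x r x' : 𝕜) • e) y‖ :=
        norm_apply_le_of_mem_setAInter h (isBddLip_tent_smul x hr e)
    _ = tent x r z * ‖e‖ := by rw [hz, norm_tent_smul]
    _ ≤ tent x r z := mul_le_of_le_one_right tent_nonneg he

end LocalIsometry

theorem stmt3_general {𝕜 X Y E F : Type*} [RCLike 𝕜]
    [MetricSpace X] [MetricSpace Y]
    [NormedAddCommGroup E] [NormedSpace 𝕜 E]
    [NormedAddCommGroup F] [NormedSpace 𝕜 F]
    (Δ : (X → E) → (Y → F)) (hΔ : Is2LocalStdLipIso 𝕜 Δ)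
    (y : Y) (x₁ x₂ : X) (u₁ u₂ : StrongDual 𝕜 E) (v₁ v₂ : StrongDual 𝕜 F)
    (hu₁ : ‖u₁‖ = 1) (hu₂ : ‖u₂‖ = 1)
    (h₁ : (y, v₁) ∈ setAInter 𝕜 Δ x₁ u₁) (h₂ : (y, v₂) ∈ setAInter 𝕜 Δ x₂ u₂) :
    x₁ = x₂ := by
  by_contra hne
  have hr : 0 < dist x₁ x₂ := dist_pos.mpr hne
  obtain ⟨e₁, he₁, hue₁⟩ := u₁.exists_lt_apply_of_lt_opNorm (r := 1 / 2) (by norm_num [hu₁])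
  obtain ⟨e₂, he₂, hue₂⟩ := u₂.exists_lt_apply_of_lt_opNorm (r := 1 / 2) (by norm_num [hu₂])
  obtain ⟨z, hz₁, hz₂⟩ := hΔ.exists_norm_apply_eq
    (isBddLip_tent_smul (𝕜 := 𝕜) x₁ hr e₁) (isBddLip_tent_smul (𝕜 := 𝕜) x₂ hr e₂) y
  have hzx₁ := dist_lt_half_of_mem_setAInter h₁ hr he₁.le hue₁ hz₁
  have hzx₂ := dist_lt_half_of_mem_setAInter h₂ hr he₂.le hue₂ hz₂
  linarith [dist_triangle_left x₁ x₂ z]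

/-- Lemma 2.2(a): the first coordinate `x` is uniquely determined. -/
theorem stmt3 {𝕜 X Y E F : Type*} [RCLike 𝕜]
    [MetricSpace X] [CompactSpace X] [MetricSpace Y] [CompactSpace Y]
    [NormedAddCommGroup E] [NormedSpace 𝕜 E] [CompleteSpace E]
    [NormedAddCommGroup F] [NormedSpace 𝕜 F] [CompleteSpace F]
    (hEsm : IsSmooth 𝕜 E) (hErefl : IsReflexiveSp 𝕜 E)
    (hFsm : IsSmooth 𝕜 F) (hFrefl : IsReflexiveSp 𝕜 F)
    (Δ : (X → E) → (Y → F)) (hΔ : Is2LocalStdLipIso 𝕜 Δ)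
    (y : Y) (x₁ x₂ : X) (u₁ u₂ : StrongDual 𝕜 E) (v₁ v₂ : StrongDual 𝕜 F)
    (hu₁ : ‖u₁‖ = 1) (hu₂ : ‖u₂‖ = 1) (hv₁ : ‖v₁‖ = 1) (hv₂ : ‖v₂‖ = 1)
    (h₁ : (y, v₁) ∈ setAInter 𝕜 Δ x₁ u₁) (h₂ : (y, v₂) ∈ setAInter 𝕜 Δ x₂ u₂) :
    x₁ = x₂ :=
  stmt3_general Δ hΔ y x₁ x₂ u₁ u₂ v₁ v₂ hu₁ hu₂ h₁ h₂
end
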